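/- Under the stated assumptions, s_p(K_{s,t},G_n) → 1 as n → ∞ for all integers s,t ≥ 1, where K_{s,t} is the complete bipartite graph with parts of sizes s and t. Moreover, K_{1,s} is flat over the empty graph on s vertices: for every s ≥ 1 and every ε > 0, the number of s-tuples (v_1,…,v_s) ∈ V(G_n)^s whose number of common neighbours in G_n differs from n·p(n)^s by more than ε·n·p(n)^s is at most ε·n^s for all sufficiently large n. -/

import Mathlib

open MeasureTheory Set Filter
open scoped ENNReal Classical

noncomputable section

/-- The (0-based) index of the subinterval `((i)/n, (i+1)/n]` of `[0,1]` containing `x`. -/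
def idx (n : ℕ) (x : ℝ) : ℕ := ⌈x * n⌉₊ - 1

/-- The subset of `[0,1]` corresponding to a set of vertices of a graph on `Fin n`:
the union of the intervals `(i/n, (i+1)/n]` for `i ∈ X` (vertices `0`-indexed). -/
def vtxSet (n : ℕ) (X : Finset (Fin n)) : Set ℝ :=
  ⋃ i ∈ X, Ioc ((i : ℝ) / n) (((i : ℝ) + 1) / n)

/-- The kernel associated to a graph `G` on `{1,…,n}` and normalizing constant `p`:
it takes the value `1/p` on `((i−1)/n, i/n] × ((j−1)/n, j/n]` whenever `ij ∈ E(G)`,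
and `0` elsewhere. -/
def graphKernel {n : ℕ} (p : ℝ) (G : SimpleGraph (Fin n)) : ℝ → ℝ → ℝ := fun x y =>
  if h : x ∈ Ioc (0:ℝ) 1 ∧ y ∈ Ioc (0:ℝ) 1 ∧ idx n x < n ∧ idx n y < n then
    (if G.Adj ⟨idx n x, h.2.2.1⟩ ⟨idx n y, h.2.2.2⟩ then 1 / p else 0)
  else 0

/-- The cut norm of `W : [0,1]² → ℝ`. -/
def cutNorm (W : ℝ → ℝ → ℝ) : ℝ :=
  sSup {r | ∃ S T : Set ℝ, MeasurableSet S ∧ MeasurableSet T ∧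
    S ⊆ Icc 0 1 ∧ T ⊆ Icc 0 1 ∧ r = |∫ q in S ×ˢ T, W q.1 q.2|}

/-- `τ` is a Lebesgue-measure-preserving bijection of `[0,1]`. -/
def MPBij (τ : ℝ → ℝ) : Prop :=
  MeasurePreserving τ (volume.restrict (Icc 0 1)) (volume.restrict (Icc 0 1)) ∧
    BijOn τ (Icc 0 1) (Icc 0 1)

/-- The cut distance between two kernels. -/
def cutDist (κ₁ κ₂ : ℝ → ℝ → ℝ) : ℝ :=
  sInf {r | ∃ τ : ℝ → ℝ, MPBij τ ∧ r = cutNorm (fun x y => κ₁ x y - κ₂ (τ x) (τ y))}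

/-- The number of homomorphisms from `F` to `G`. -/
def homCount {α β : Type*} (F : SimpleGraph α) (G : SimpleGraph β) : ℕ :=
  Nat.card (F →g G)

/-- The number of injective homomorphisms (embeddings) from `F` to `G`. -/
def embCount {α β : Type*} (F : SimpleGraph α) (G : SimpleGraph β) : ℕ :=
  Nat.card {φ : F →g G // Function.Injective φ}

/-- The number of edges of a graph. -/
def edgeCount {α : Type*} (F : SimpleGraph α) : ℕ := Nat.card F.edgeSet

/-- The normalized homomorphism count `t_p(F,G)`. -/
def tDen {α β : Type*} [Fintype α] [Fintype β] (p : ℝ) (F : SimpleGraph α)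
    (G : SimpleGraph β) : ℝ :=
  homCount F G / (p ^ edgeCount F * (Fintype.card β : ℝ) ^ Fintype.card α)

/-- The normalized embedding count `s_p(F,G)`. -/
def sDen {α β : Type*} [Fintype α] [Fintype β] (p : ℝ) (F : SimpleGraph α)
    (G : SimpleGraph β) : ℝ :=
  embCount F G / (p ^ edgeCount F * ((Fintype.card β).descFactorial (Fintype.card α) : ℝ))

/-- The homomorphism density `s(F,κ)` of a finite graph in a kernel. -/
def homDensity {α : Type*} [Fintype α] (F : SimpleGraph α) (κ : ℝ → ℝ → ℝ) : ℝ :=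
  ∫ x in Set.univ.pi (fun _ : α => Icc (0:ℝ) 1),
    ∏ e ∈ F.edgeFinset,
      Sym2.lift ⟨fun i j => (κ (x i) (x j) + κ (x j) (x i)) / 2,
        fun i j => by dsimp only; rw [add_comm (κ (x i) (x j)) (κ (x j) (x i))]⟩ e

/-- The homomorphism density as a lower integral (for possibly unbounded kernels). -/
def homDensityL {α : Type*} [Fintype α] (F : SimpleGraph α) (κ : ℝ → ℝ → ℝ) : ℝ≥0∞ :=
  ∫⁻ x in Set.univ.pi (fun _ : α => Icc (0:ℝ) 1),
    ∏ e ∈ F.edgeFinset,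
      Sym2.lift ⟨fun i j => ENNReal.ofReal ((κ (x i) (x j) + κ (x j) (x i)) / 2),
        fun i j => by dsimp only; rw [add_comm (κ (x i) (x j)) (κ (x j) (x i))]⟩ e

/-- A kernel: a symmetric measurable function `[0,1]² → [0,∞)`. -/
def IsKernel (κ : ℝ → ℝ → ℝ) : Prop :=
  Measurable (Function.uncurry κ) ∧ (∀ x y, κ x y = κ y x) ∧ ∀ x y, 0 ≤ κ x y

/-- A kernel taking values in `[0,C]`. -/
def IsKernelBdd (κ : ℝ → ℝ → ℝ) (C : ℝ) : Prop :=
  Measurable (Function.uncurry κ) ∧ (∀ x y, κ x y = κ y x) ∧ ∀ x y, κ x y ∈ Icc 0 C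

/-- A standard kernel: a symmetric measurable function `[0,1]² → [0,1]`. -/
def IsStdKernel (κ : ℝ → ℝ → ℝ) : Prop := IsKernelBdd κ 1

/-- A doubly stochastic measure: a Borel measure on `[0,1]²` both of whose marginals
are Lebesgue measure on `[0,1]`. -/
def IsDoublyStochastic (μ : Measure (ℝ × ℝ)) : Prop :=
  μ.map Prod.fst = volume.restrict (Icc 0 1) ∧ μ.map Prod.snd = volume.restrict (Icc 0 1)

/-- The quantity `d_μ(κ₁,κ₂)`. -/
def dMu (μ : Measure (ℝ × ℝ)) (κ₁ κ₂ : ℝ → ℝ → ℝ) : ℝ :=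
  sSup {r | ∃ S T : Set (ℝ × ℝ), MeasurableSet S ∧ MeasurableSet T ∧
    S ⊆ Icc 0 1 ×ˢ Icc 0 1 ∧ T ⊆ Icc 0 1 ×ˢ Icc 0 1 ∧
    r = |∫ w in S ×ˢ T, (κ₁ w.1.1 w.2.1 - κ₂ w.1.2 w.2.2) ∂(μ.prod μ)|}

/-- Equivalence of kernels via a coupling. -/
def KernelEquiv (κ₁ κ₂ : ℝ → ℝ → ℝ) : Prop :=
  ∃ μ : Measure (ℝ × ℝ), IsDoublyStochastic μ ∧
    ∀ᵐ w ∂(μ.prod μ), κ₁ w.1.1 w.2.1 = κ₂ w.1.2 w.2.2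

/-- `e_G(A,B)`: the number of ordered pairs `(i,j) ∈ A × B` with `ij ∈ E(G)`. -/
def ePairs {n : ℕ} (G : SimpleGraph (Fin n)) (A B : Finset (Fin n)) : ℕ :=
  ((A ×ˢ B).filter fun q => G.Adj q.1 q.2).card

/-- The normalized density `d_p(A,B)`. -/
def dDens {n : ℕ} (p : ℝ) (G : SimpleGraph (Fin n)) (A B : Finset (Fin n)) : ℝ :=
  ePairs G A B / (p * A.card * B.card)

/-- A sequence of graphs has density bounded by `C`. -/
def DensityBoundedBy (p : ℕ → ℝ) (G : ∀ n, SimpleGraph (Fin n)) (C : ℝ) : Prop :=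
  ∀ ε > (0:ℝ), ∀ δ > (0:ℝ), ∀ᶠ n in atTop, ∀ A B : Finset (Fin n),
    ε * n ≤ A.card → ε * n ≤ B.card → dDens (p n) (G n) A B ≤ C + δ

/-- The parts of a partition of `Fin n` indexed by `Fin k`, given as a colouring. -/
def fiber {n k : ℕ} (c : Fin n → Fin k) (a : Fin k) : Finset (Fin n) :=
  Finset.univ.filter fun v => c v = a

/-- The finite-type kernel `G/Π` associated to a partition of the vertex set of `G`. -/
def partKernel {n k : ℕ} (p : ℝ) (G : SimpleGraph (Fin n)) (c : Fin n → Fin k) :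
    ℝ → ℝ → ℝ := fun x y =>
  if h : x ∈ Ioc (0:ℝ) 1 ∧ y ∈ Ioc (0:ℝ) 1 ∧ idx n x < n ∧ idx n y < n then
    dDens p G (fiber c (c ⟨idx n x, h.2.2.1⟩)) (fiber c (c ⟨idx n y, h.2.2.2⟩))
  else 0

/-- A partition is weakly `(ε,p)`-regular for `G`. -/
def WeaklyRegular {n k : ℕ} (p ε : ℝ) (G : SimpleGraph (Fin n)) (c : Fin n → Fin k) : Prop :=
  cutNorm (fun x y => graphKernel p G x y - partKernel p G c x y) ≤ ε

/-- `(A,B)` is an `(ε,p)`-regular pair for `G`. -/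
def RegPair {n : ℕ} (p ε : ℝ) (G : SimpleGraph (Fin n)) (A B : Finset (Fin n)) : Prop :=
  ∀ A' ⊆ A, ∀ B' ⊆ B, ε * A.card ≤ A'.card → ε * B.card ≤ B'.card →
    |dDens p G A' B' - dDens p G A B| ≤ ε

/-- An `(ε,p)`-regular partition of `G` into `k` parts. -/
def RegPartition {n k : ℕ} (p ε : ℝ) (G : SimpleGraph (Fin n)) (c : Fin n → Fin k) : Prop :=
  (∀ a : Fin k, (fiber c a).card = n / k ∨ (fiber c a).card = n / k + 1) ∧
  ((Finset.univ.filter (fun q : Fin k × Fin k =>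
      q.1 < q.2 ∧ ¬ RegPair p ε G (fiber c q.1) (fiber c q.2))).card : ℝ)
    ≤ ε * ((k : ℝ) * ((k : ℝ) - 1) / 2)

/-- The number of walks `v₀v₁⋯v_ℓ` in `G` with `v_i ∈ X_i` for each `i`. -/
def walkCount {n ℓ : ℕ} (G : SimpleGraph (Fin n)) (X : Fin (ℓ+1) → Finset (Fin n)) : ℕ :=
  Nat.card {v : Fin (ℓ+1) → Fin n //
    (∀ i, v i ∈ X i) ∧ ∀ i : Fin ℓ, G.Adj (v i.castSucc) (v i.succ)}

/-- `κ(X₀,X₁,…,X_ℓ)`: the kernel analogue of the walk count. -/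
def kernelWalk {ℓ : ℕ} (κ : ℝ → ℝ → ℝ) (X : Fin (ℓ+1) → Set ℝ) : ℝ :=
  ∫ x in Set.univ.pi X, ∏ i : Fin ℓ, κ (x i.castSucc) (x i.succ)

/-- `p_t(u,v)`: the number of paths of length `t` in `G` from `u` to `v`. -/
def pathCount {n : ℕ} (G : SimpleGraph (Fin n)) (t : ℕ) (u v : Fin n) : ℕ :=
  Nat.card {w : Fin (t+1) → Fin n // w 0 = u ∧ w (Fin.last t) = v ∧
    Function.Injective w ∧ ∀ i : Fin t, G.Adj (w i.castSucc) (w i.succ)}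

/-- The `i`-th vertex on the `r`-th subdivided edge (from `u r` to `v r`, `ℓ` steps). -/
def pv (ℓ : ℕ) {k m : ℕ} (u v : Fin m → Fin k) (r : Fin m) (i : ℕ) :
    Fin k ⊕ (Fin m × Fin (ℓ - 1)) :=
  if h0 : i = 0 then Sum.inl (u r)
  else if h : i < ℓ then Sum.inr (r, ⟨i - 1, by omega⟩)
  else Sum.inl (v r)

/-- The `(ℓ−1)`-fold subdivision of the loopless multigraph with `k` vertices and
edges `u r — v r` for `r < m`. -/
def multiSubdiv (ℓ : ℕ) {k m : ℕ} (u v : Fin m → Fin k) :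
    SimpleGraph (Fin k ⊕ (Fin m × Fin (ℓ - 1))) :=
  SimpleGraph.fromRel fun a b =>
    ∃ r : Fin m, ∃ i : ℕ, i < ℓ ∧ a = pv ℓ u v r i ∧ b = pv ℓ u v r (i + 1)

/-- Membership in the family `F_ℓ` of `(ℓ−1)`-fold subdivisions of finite loopless
multigraphs. -/
def InFamilyF (ℓ : ℕ) {N : ℕ} (F : SimpleGraph (Fin N)) : Prop :=
  ∃ (k m : ℕ) (u v : Fin m → Fin k), 1 ≤ k ∧ (∀ r, u r ≠ v r) ∧
    Nonempty (F ≃g multiSubdiv ℓ u v)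

/-- The edges of a simple graph on `Fin k`, as ordered pairs `(i,j)` with `i < j`. -/
abbrev edgeIdx {k : ℕ} (F : SimpleGraph (Fin k)) : Type :=
  {q : Fin k × Fin k // q.1 < q.2 ∧ F.Adj q.1 q.2}

/-- The `i`-th vertex on the subdivision of the edge `e` (`t` steps). -/
def spv (t : ℕ) {k : ℕ} {F : SimpleGraph (Fin k)} (e : edgeIdx F) (i : ℕ) :
    Fin k ⊕ (edgeIdx F × Fin (t - 1)) :=
  if h0 : i = 0 then Sum.inl e.1.1
  else if h : i < t then Sum.inr (e, ⟨i - 1, by omega⟩)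
  else Sum.inl e.1.2

/-- The `t`-subdivision `Sub_t(F)` of a simple graph `F`: each edge is replaced by a
path of length `t` through `t−1` new internal vertices. -/
def subdiv (t : ℕ) {k : ℕ} (F : SimpleGraph (Fin k)) :
    SimpleGraph (Fin k ⊕ (edgeIdx F × Fin (t - 1))) :=
  SimpleGraph.fromRel fun a b =>
    ∃ e : edgeIdx F, ∃ i : ℕ, i < t ∧ a = spv t e i ∧ b = spv t e (i + 1)

/-- The `t`-th power kernel `κ^t`. -/
def kpow (κ : ℝ → ℝ → ℝ) : ℕ → ℝ → ℝ → ℝ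
  | 0 => fun _ _ => 0
  | 1 => κ
  | (n + 2) => fun x y => ∫ z in Icc (0:ℝ) 1, kpow κ (n + 1) x z * κ z y

/-- `φ : Fin ℓ → Fin n` is a homomorphism from `F` to `G`. -/
def IsHom {α β : Type*} (F : SimpleGraph α) (G : SimpleGraph β) (φ : α → β) : Prop :=
  ∀ i j, F.Adj i j → G.Adj (φ i) (φ j)

/-- `F` is flat over its induced subgraph `F'` on the first `ℓ` vertices, for the
sequence `(G_n)` with normalizing function `p`. -/
def FlatOver (p : ℕ → ℝ) (G : ∀ n, SimpleGraph (Fin n)) {k ℓ : ℕ} (h : ℓ ≤ k)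
    (F : SimpleGraph (Fin k)) : Prop :=
  ∀ ε > (0:ℝ), ∀ᶠ n in atTop,
    ((Finset.univ.filter (fun φ : Fin ℓ → Fin n =>
        IsHom (F.comap (Fin.castLE h)) (G n) φ ∧
        ε * ((n:ℝ) ^ (k - ℓ) * p n ^ (edgeCount F - edgeCount (F.comap (Fin.castLE h)))) <
          |((Finset.univ.filter (fun ψ : Fin k → Fin n =>
              IsHom F (G n) ψ ∧ ψ ∘ Fin.castLE h = φ)).card : ℝ) -
            (n:ℝ) ^ (k - ℓ) * p n ^ (edgeCount F - edgeCount (F.comap (Fin.castLE h)))|)).card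
      : ℝ)
      ≤ ε * ((Finset.univ.filter (fun φ : Fin ℓ → Fin n =>
          IsHom (F.comap (Fin.castLE h)) (G n) φ)).card : ℝ)

/-- The set of density matrices of balanced partitions of `V(G)` into `k` nonempty
parts. -/
def MsetG (k : ℕ) {n : ℕ} (p : ℝ) (G : SimpleGraph (Fin n)) : Set (Fin k → Fin k → ℝ) :=
  {M | ∃ c : Fin n → Fin k, Function.Surjective c ∧
    (∀ a b, (fiber c a).card ≤ (fiber c b).card + 1) ∧
    M = fun a b => dDens p G (fiber c a) (fiber c b)}

/-- The closed set of density matrices of partitions of `[0,1]` into `k` parts of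
measure `1/k`, for a kernel `κ`. -/
def MsetK (k : ℕ) (κ : ℝ → ℝ → ℝ) : Set (Fin k → Fin k → ℝ) :=
  closure {M | ∃ Q : Fin k → Set ℝ, (∀ a, MeasurableSet (Q a)) ∧
    (Pairwise fun a b => Disjoint (Q a) (Q b)) ∧ (⋃ a, Q a) = Icc 0 1 ∧
    (∀ a, volume (Q a) = 1 / (k : ℝ≥0∞)) ∧
    M = fun a b => (k : ℝ)^2 * ∫ q in (Q a) ×ˢ (Q b), κ q.1 q.2}

end

/-!
Write `t(a,b)` for `t_p(K_{a,b}, G_n)`. A homomorphism `K_{a,b} → G` is an `a`-tuple `v` together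
with a `b`-tuple inside the common neighbourhood `N(v)`, so `t(a,b)` is the normalised `b`-th
moment of `|N(v)|` over `v ∈ V^a`. A non-injective homomorphism identifies two vertices on one
side and so comes from `K_{a,b-1}` or `K_{a-1,b}`; since `p^d n → ∞`, these are negligible.
Hence `t(a,b)` and `s_p(K_{a,b}, G_n)` have the same limits, and induction on `a + b` shows
that every `t(a,b)` stays bounded.

Cauchy–Schwarz gives `t(1,1)² ≤ t(1,2) = t(2,1) ≤ √t(2,2)`, so `t(1,2) → 1`. If
`t(a,1), t(a,2) → 1`, then the variance of `|N(v)|` is `o((np^a)²)`, and by Chebyshev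
`|N(v)| ≈ np^a` for almost every `v`. Conversely, if this concentration holds for `a`-tuples and
`t(a,2b)` is bounded, then `t(a,b) → 1`, because Cauchy–Schwarz bounds the contribution of the
few deviant tuples. Starting from `a = 1, 2` and using `t(a,b) = t(b,a)`, we get concentration
for every `a` and then `t(a,b) → 1` for every `a` and `b`.
-/

open Finset Function Topology

notation "K[" a ", " b "]" => completeBipartiteGraph (Fin a) (Fin b)

section Invariance

variable {α β γ : Type*} {F : SimpleGraph α} {F' : SimpleGraph β}

lemma embCount_congr (e : F ≃g F') (G : SimpleGraph γ) : embCount F G = embCount F' G :=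
  Nat.card_congr <| (e.homCongr (.refl : G ≃g G)).subtypeEquiv fun φ => by
    change _ ↔ Injective (φ ∘ e.symm)
    rw [EquivLike.injective_comp]

lemma edgeCount_congr (e : F ≃g F') : edgeCount F = edgeCount F' :=
  Nat.card_congr e.mapEdgeSet

lemma sDen_congr [Fintype α] [Fintype β] [Fintype γ] (e : F ≃g F') (q : ℝ)
    (G : SimpleGraph γ) : sDen q F G = sDen q F' G := by
  rw [sDen, sDen, embCount_congr e, edgeCount_congr e, Fintype.card_congr e.toEquiv]

end Invariance

lemma edgeCount_completeBipartiteGraph (ι κ : Type*) [Finite ι] [Finite κ] :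
    edgeCount (completeBipartiteGraph ι κ) = Nat.card ι * Nat.card κ := by
  rw [edgeCount, SimpleGraph.edgeSet_completeBipartiteGraph, Nat.card_range_of_injective,
    Nat.card_prod]
  grind [Injective]

def topIsoCompleteBipartiteGraph : (⊤ : SimpleGraph (Fin 2)) ≃g K[1, 1] where
  toEquiv := ⟨![.inl 0, .inr 0], Sum.elim ![0] ![1], by decide, by decide⟩
  map_rel_iff' := by intro a b; fin_cases a <;> fin_cases b <;> simp

def cycleGraphIsoCompleteBipartiteGraph : SimpleGraph.cycleGraph 4 ≃g K[2, 2] where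
  toEquiv := ⟨![.inl 0, .inr 0, .inl 1, .inr 1], Sum.elim ![0, 2] ![1, 3], by decide, by decide⟩
  map_rel_iff' := by
    intro a b; fin_cases a <;> fin_cases b <;> simp [SimpleGraph.cycleGraph_adj] <;> decide

section Tuples

variable {α : Type*} [DecidableEq α] (S : Finset α)

lemma card_filter_apply_eq_le {b : ℕ} {i j : Fin (b + 1)} (hij : i ≠ j) :
    #((Fintype.piFinset fun _ => S).filter fun w => w i = w j) ≤ #S ^ b := by
  calc _ ≤ #(Fintype.piFinset fun _ : Fin b => S) := by
        refine card_le_card_of_injOn (· ∘ j.succAbove) (fun w hw => ?_) fun w hw w' hw' h => ?_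
        · simp only [Finset.mem_coe, Finset.mem_filter, Fintype.mem_piFinset] at hw
          simp [hw.1]
        simp only [Finset.mem_coe, Finset.mem_filter] at hw hw'
        have hagree : ∀ k, k ≠ j → w k = w' k := fun k hk => by
          obtain ⟨z, rfl⟩ := Fin.exists_succAbove_eq hk
          exact congrFun h z
        funext k
        obtain rfl | hk := eq_or_ne k j
        · rw [← hw.2, ← hw'.2, hagree i hij]
        · exact hagree k hk
    _ = #S ^ b := by simp

lemma card_filter_not_injective_le (b : ℕ) :
    #((Fintype.piFinset fun _ : Fin (b + 1) => S).filter fun w => ¬ Injective w) ≤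
      (b + 1) ^ 2 * #S ^ b := by
  have hsub : (Fintype.piFinset fun _ : Fin (b + 1) => S).filter (fun w => ¬ Injective w) ⊆
      univ.offDiag.biUnion fun ij =>
        (Fintype.piFinset fun _ => S).filter fun w => w ij.1 = w ij.2 := by
    intro w hw
    obtain ⟨hw, hni⟩ := Finset.mem_filter.1 hw
    obtain ⟨i, j, hwij, hij⟩ := not_injective_iff.1 hni
    simp only [Finset.mem_biUnion, Finset.mem_offDiag, Finset.mem_univ, true_and, Finset.mem_filter]
    exact ⟨(i, j), hij, hw, hwij⟩
  calc _ ≤ _ := Finset.card_le_card hsub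
    _ ≤ ∑ ij ∈ (univ : Finset (Fin (b + 1))).offDiag, #S ^ b :=
        card_biUnion_le.trans <| sum_le_sum fun ij hij =>
          card_filter_apply_eq_le S (Finset.mem_offDiag.1 hij).2.2
    _ ≤ (b + 1) ^ 2 * #S ^ b := by
        rw [sum_const, smul_eq_mul, offDiag_card, card_univ, Fintype.card_fin, sq]
        exact Nat.mul_le_mul_right _ (Nat.sub_le _ _)

end Tuples

section BipartiteHoms

variable {V : Type*} [Fintype V] (G : SimpleGraph V)

noncomputable def commonNbrs {ι : Type*} (v : ι → V) : Finset V :=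
  univ.filter fun w => ∀ i, G.Adj w (v i)

noncomputable def bipartiteHoms (ι κ : Type*) [Fintype ι] [Fintype κ] [DecidableEq ι]
    [DecidableEq κ] : Finset ((ι → V) × (κ → V)) :=
  univ.filter fun q => ∀ i j, G.Adj (q.1 i) (q.2 j)

variable {G} {ι κ : Type*} [Fintype ι] [Fintype κ] [DecidableEq ι] [DecidableEq κ]

lemma mem_bipartiteHoms {q : (ι → V) × (κ → V)} :
    q ∈ bipartiteHoms G ι κ ↔ ∀ i j, G.Adj (q.1 i) (q.2 j) := by
  simp [bipartiteHoms]

def homEquivBipartiteHoms : (completeBipartiteGraph ι κ →g G) ≃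
    {q : (ι → V) × (κ → V) // ∀ i j, G.Adj (q.1 i) (q.2 j)} where
  toFun φ := ⟨(φ ∘ Sum.inl, φ ∘ Sum.inr), fun i j => φ.map_adj (by simp)⟩
  invFun q := ⟨Sum.elim q.1.1 q.1.2, by
    rintro (i | i) (j | j) h <;> simp at h ⊢
    exacts [q.2 i j, (q.2 j i).symm]⟩
  left_inv φ := by ext (x | x) <;> rfl
  right_inv q := rfl

lemma homCount_completeBipartiteGraph :
    homCount (completeBipartiteGraph ι κ) G = #(bipartiteHoms G ι κ) := by
  rw [homCount, Nat.card_congr homEquivBipartiteHoms, Nat.card_eq_fintype_card,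
    Fintype.card_subtype, bipartiteHoms]

lemma embCount_completeBipartiteGraph :
    embCount (completeBipartiteGraph ι κ) G =
      #((bipartiteHoms G ι κ).filter fun q => Injective (Sum.elim q.1 q.2)) := by
  rw [embCount, Nat.card_congr (homEquivBipartiteHoms.subtypeEquiv
      (q := fun q => Injective (Sum.elim q.1.1 q.1.2)) fun φ => by
        change _ ↔ Injective (Sum.elim (φ ∘ Sum.inl) (φ ∘ Sum.inr))
        rw [Sum.elim_comp_inl_inr]),
    Nat.card_congr (Equiv.subtypeSubtypeEquivSubtypeInter (fun q : (ι → V) × (κ → V) => _)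
      fun q => Injective (Sum.elim q.1 q.2)),
    Nat.card_eq_fintype_card, Fintype.card_subtype, bipartiteHoms, filter_filter]

lemma card_filter_bipartiteHoms (P : (κ → V) → Prop) [DecidablePred P] :
    #((bipartiteHoms G ι κ).filter fun q => P q.2) =
      ∑ v : ι → V, #((Fintype.piFinset fun _ : κ => commonNbrs G v).filter P) := by
  rw [card_eq_sum_card_fiberwise (f := Prod.fst) (t := univ) fun _ _ => Finset.mem_univ _]
  refine sum_congr rfl fun v _ => card_nbij Prod.snd ?_ ?_ ?_
  · rintro ⟨v', w⟩ hq
    simp only [Finset.mem_coe, Finset.mem_filter, mem_bipartiteHoms] at hq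
    obtain ⟨⟨hadj, hP⟩, rfl⟩ := hq
    simpa [commonNbrs, hP] using fun j i => (hadj i j).symm
  · intro q hq q' hq' h
    simp_all [Prod.ext_iff]
  · intro w hw
    refine ⟨(v, w), ?_, rfl⟩
    simp_all [commonNbrs, mem_bipartiteHoms, G.adj_comm]

lemma card_bipartiteHoms :
    #(bipartiteHoms G ι κ) = ∑ v : ι → V, #(commonNbrs G v) ^ Fintype.card κ := by
  simpa using card_filter_bipartiteHoms (G := G) (ι := ι) (κ := κ) fun _ => True

lemma card_filter_bipartiteHoms_fst (P : (ι → V) → Prop) [DecidablePred P] :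
    #((bipartiteHoms G ι κ).filter fun q => P q.1) =
      #((bipartiteHoms G κ ι).filter fun q => P q.2) := by
  have hswap (q : (ι → V) × (κ → V)) : q ∈ bipartiteHoms G ι κ ↔ q.swap ∈ bipartiteHoms G κ ι := by
    simp only [mem_bipartiteHoms, Prod.fst_swap, Prod.snd_swap, G.adj_comm (q.2 _)]
    exact forall_comm
  refine card_nbij' Prod.swap Prod.swap (fun q hq => ?_) (fun q hq => ?_)
    (fun q _ => q.swap_swap) (fun q _ => q.swap_swap)
  · simp only [Finset.mem_coe, Finset.mem_filter, hswap q] at hq ⊢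
    simpa using hq
  · simp only [Finset.mem_coe, Finset.mem_filter, hswap q.swap] at hq ⊢
    simpa using hq

lemma card_filter_not_injective_snd_le (b : ℕ) :
    #((bipartiteHoms G ι (Fin (b + 1))).filter fun q => ¬ Injective q.2) ≤
      (b + 1) ^ 2 * #(bipartiteHoms G ι (Fin b)) := by
  rw [card_filter_bipartiteHoms (G := G) (κ := Fin (b + 1)) (fun w => ¬ Injective w),
    card_bipartiteHoms, mul_sum, Fintype.card_fin]
  exact sum_le_sum fun v _ => card_filter_not_injective_le _ b

lemma card_bipartiteHoms_le :
    #(bipartiteHoms G ι κ) ≤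
      #((bipartiteHoms G ι κ).filter fun q => Injective (Sum.elim q.1 q.2)) +
        #((bipartiteHoms G ι κ).filter fun q => ¬ Injective q.1) +
        #((bipartiteHoms G ι κ).filter fun q => ¬ Injective q.2) := by
  refine (Finset.card_le_card fun q hq => ?_).trans <| (Finset.card_union_le _ _).trans <|
    Nat.add_le_add_right (Finset.card_union_le _ _) _
  simp only [Finset.mem_union, Finset.mem_filter, hq, true_and]
  by_contra! h
  exact h.1.1 (h.1.2.sumElim h.2 fun i j => G.ne_of_adj (mem_bipartiteHoms.1 hq i j))

variable (G) in
lemma homCount_le_embCount_add (a b : ℕ) :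
    homCount K[a + 1, b + 1] G ≤ embCount K[a + 1, b + 1] G +
      (a + 1) ^ 2 * homCount K[b + 1, a] G + (b + 1) ^ 2 * homCount K[a + 1, b] G := by
  simp only [homCount_completeBipartiteGraph, embCount_completeBipartiteGraph]
  refine card_bipartiteHoms_le.trans <|
    add_le_add (add_le_add le_rfl ?_) (card_filter_not_injective_snd_le b)
  rw [card_filter_bipartiteHoms_fst (G := G) (ι := Fin (a + 1)) (κ := Fin (b + 1))
    (fun v => ¬ Injective v)]
  exact card_filter_not_injective_snd_le a

end BipartiteHoms

section Densities

variable {V : Type*} [Fintype V] (G : SimpleGraph V) {q : ℝ}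

lemma homCount_le {α : Type*} [Fintype α] (F : SimpleGraph α) :
    homCount F G ≤ Fintype.card V ^ Fintype.card α := by
  rw [homCount, ← Fintype.card_fun, ← Nat.card_eq_fintype_card]
  exact Nat.card_le_card_of_injective _ DFunLike.coe_injective

lemma tDen_nonneg {α : Type*} [Fintype α] (F : SimpleGraph α) (hq : 0 ≤ q) : 0 ≤ tDen q F G := by
  unfold tDen; positivity

lemma sDen_nonneg {α : Type*} [Fintype α] (F : SimpleGraph α) (hq : 0 ≤ q) : 0 ≤ sDen q F G := by
  unfold sDen; positivity

lemma tDen_le_one_of_edgeCount_eq_zero {α : Type*} [Fintype α] {F : SimpleGraph α}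
    (hF : edgeCount F = 0) (q : ℝ) : tDen q F G ≤ 1 := by
  rw [tDen, hF, pow_zero, one_mul]
  exact div_le_one_of_le₀ (by exact_mod_cast homCount_le G F) (by positivity)

lemma sDen_mul_descFactorial_div {α : Type*} [Fintype α] (F : SimpleGraph α) (hq : q ≠ 0)
    (hn : Fintype.card α ≤ Fintype.card V) :
    sDen q F G *
        ((Fintype.card V).descFactorial (Fintype.card α) / Fintype.card V ^ Fintype.card α) =
      embCount F G / (q ^ edgeCount F * Fintype.card V ^ Fintype.card α) := by
  have hD := Nat.descFactorial_pos.2 hn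
  have hD' : ((Fintype.card V).descFactorial (Fintype.card α) : ℝ) ≠ 0 := by exact_mod_cast hD.ne'
  have hN : (Fintype.card V : ℝ) ^ Fintype.card α ≠ 0 := by
    exact_mod_cast (hD.trans_le (Nat.descFactorial_le_pow _ _)).ne'
  rw [sDen]
  field_simp

lemma sDen_mul_le_tDen {α : Type*} [Fintype α] (F : SimpleGraph α) (hq : 0 < q)
    (hn : Fintype.card α ≤ Fintype.card V) :
    sDen q F G *
        ((Fintype.card V).descFactorial (Fintype.card α) / Fintype.card V ^ Fintype.card α) ≤
      tDen q F G := by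
  rw [sDen_mul_descFactorial_div G F hq.ne' hn, tDen]
  gcongr
  exact_mod_cast Finite.card_subtype_le _

lemma tDen_completeBipartiteGraph (q : ℝ) (a b : ℕ) :
    tDen q K[a, b] G = homCount K[a, b] G / (q ^ (a * b) * Fintype.card V ^ (a + b)) := by
  simp [tDen, edgeCount_completeBipartiteGraph]

lemma tDen_completeBipartiteGraph_eq_sum (q : ℝ) (a b : ℕ) :
    tDen q K[a, b] G = (∑ v : Fin a → V, (#(commonNbrs G v) : ℝ) ^ b) /
      (q ^ (a * b) * Fintype.card V ^ (a + b)) := by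
  rw [tDen_completeBipartiteGraph, homCount_completeBipartiteGraph, card_bipartiteHoms]
  push_cast [Fintype.card_fin]
  rfl

lemma tDen_completeBipartiteGraph_comm (q : ℝ) (a b : ℕ) :
    tDen q K[a, b] G = tDen q K[b, a] G := by
  simp only [tDen_completeBipartiteGraph, homCount_completeBipartiteGraph, mul_comm a b,
    add_comm a b]
  congr 2
  simpa using card_filter_bipartiteHoms_fst (G := G) (ι := Fin a) (κ := Fin b) fun _ => True

lemma tDen_sub_sDen_mul_le (hq : 0 < q) {a b : ℕ} (hn : a + b + 2 ≤ Fintype.card V) :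
    tDen q K[a + 1, b + 1] G - sDen q K[a + 1, b + 1] G *
        ((Fintype.card V).descFactorial (a + b + 2) / Fintype.card V ^ (a + b + 2)) ≤
      (a + 1) ^ 2 * tDen q K[b + 1, a] G / (q ^ (b + 1) * Fintype.card V) +
        (b + 1) ^ 2 * tDen q K[a + 1, b] G / (q ^ (a + 1) * Fintype.card V) := by
  have hk : Fintype.card (Fin (a + 1) ⊕ Fin (b + 1)) = a + b + 2 := by simp; ring
  have hN : (0 : ℝ) < Fintype.card V := by exact_mod_cast (by omega : 0 < Fintype.card V)
  have hcount : (homCount K[a + 1, b + 1] G : ℝ) - embCount K[a + 1, b + 1] G ≤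
      (a + 1) ^ 2 * homCount K[b + 1, a] G + (b + 1) ^ 2 * homCount K[a + 1, b] G := by
    rw [sub_le_iff_le_add', ← add_assoc]
    exact_mod_cast homCount_le_embCount_add G a b
  rw [← hk, sDen_mul_descFactorial_div G _ hq.ne' (hk ▸ hn), hk, edgeCount_completeBipartiteGraph]
  simp only [tDen_completeBipartiteGraph, Nat.card_eq_fintype_card, Fintype.card_fin]
  rw [show a + 1 + (b + 1) = a + b + 2 by ring, div_sub_div_same, div_le_iff₀ (by positivity)]
  refine hcount.trans_eq ?_
  field_simp
  ring

lemma sq_tDen_le_tDen_two_mul [Nonempty V] (q : ℝ) (a b : ℕ) :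
    tDen q K[a, b] G ^ 2 ≤ tDen q K[a, 2 * b] G := by
  have hN : (0 : ℝ) < Fintype.card V := by exact_mod_cast Fintype.card_pos
  have hcs : (∑ v : Fin a → V, (#(commonNbrs G v) : ℝ) ^ b) ^ 2 ≤
      Fintype.card V ^ a * ∑ v : Fin a → V, (#(commonNbrs G v) : ℝ) ^ (2 * b) := by
    simpa [← pow_mul, mul_comm b 2] using
      sq_sum_le_card_mul_sum_sq (s := univ) (f := fun v : Fin a → V => (#(commonNbrs G v) : ℝ) ^ b)
  rw [tDen_completeBipartiteGraph_eq_sum, tDen_completeBipartiteGraph_eq_sum, div_pow]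
  calc _ ≤ (Fintype.card V ^ a * ∑ v : Fin a → V, (#(commonNbrs G v) : ℝ) ^ (2 * b)) /
        (q ^ (a * b) * Fintype.card V ^ (a + b)) ^ 2 := by gcongr
    _ = _ := by
      rw [show (q ^ (a * b) * (Fintype.card V : ℝ) ^ (a + b)) ^ 2 =
        Fintype.card V ^ a * (q ^ (a * (2 * b)) * Fintype.card V ^ (a + 2 * b)) by ring]
      exact mul_div_mul_left _ _ (by positivity)

end Densities

section Deviation

variable {V : Type*} [Fintype V] (G : SimpleGraph V) {q : ℝ}

noncomputable def deviantTuples (q ε : ℝ) (a : ℕ) : Finset (Fin a → V) :=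
  univ.filter fun v =>
    ε * (Fintype.card V * q ^ a) < |(#(commonNbrs G v) : ℝ) - Fintype.card V * q ^ a|

lemma sum_sq_card_commonNbrs_sub [Nonempty V] (hq : 0 < q) (a : ℕ) :
    ∑ v : Fin a → V, ((#(commonNbrs G v) : ℝ) - Fintype.card V * q ^ a) ^ 2 =
      Fintype.card V ^ a * (Fintype.card V * q ^ a) ^ 2 *
        (tDen q K[a, 2] G - 2 * tDen q K[a, 1] G + 1) := by
  have hN : (0 : ℝ) < Fintype.card V := by exact_mod_cast Fintype.card_pos
  simp only [tDen_completeBipartiteGraph_eq_sum, sub_sq, sum_add_distrib, sum_sub_distrib,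
    ← sum_mul, ← mul_sum, sum_const, card_univ, Fintype.card_fun, Fintype.card_fin, nsmul_eq_mul,
    pow_one]
  push_cast
  field_simp
  ring

lemma card_deviantTuples_mul_sq_le [Nonempty V] (hq : 0 < q) {ε : ℝ} (hε : 0 ≤ ε) (a : ℕ) :
    #(deviantTuples G q ε a) * ε ^ 2 ≤
      Fintype.card V ^ a * (tDen q K[a, 2] G - 2 * tDen q K[a, 1] G + 1) := by
  have hN : (0 : ℝ) < Fintype.card V := by exact_mod_cast Fintype.card_pos
  set K : ℝ := Fintype.card V * q ^ a
  have hK : 0 < K := by positivity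
  have hcheb : #(deviantTuples G q ε a) * (ε * K) ^ 2 ≤
      ∑ v : Fin a → V, ((#(commonNbrs G v) : ℝ) - K) ^ 2 := by
    calc _ ≤ ∑ v ∈ deviantTuples G q ε a, ((#(commonNbrs G v) : ℝ) - K) ^ 2 := by
          rw [← nsmul_eq_mul]
          refine card_nsmul_le_sum _ _ _ fun v hv => ?_
          rw [← sq_abs (_ - K)]
          exact pow_le_pow_left₀ (by positivity) (Finset.mem_filter.1 hv).2.le 2
      _ ≤ _ := sum_le_sum_of_subset_of_nonneg (subset_univ _) fun _ _ _ => sq_nonneg _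
  rw [sum_sq_card_commonNbrs_sub G hq] at hcheb
  refine le_of_mul_le_mul_right ?_ (pow_pos hK 2)
  linarith

lemma one_sub_pow_le_tDen [Nonempty V] (hq : 0 < q) {η : ℝ} (hη : η ≤ 1) {a : ℕ}
    (hdev : (#(deviantTuples G q η a) : ℝ) ≤ η * Fintype.card V ^ a) (b : ℕ) :
    (1 - η) ^ (b + 1) ≤ tDen q K[a, b] G := by
  have hN : (0 : ℝ) < Fintype.card V := by exact_mod_cast Fintype.card_pos
  set K : ℝ := Fintype.card V * q ^ a
  have hK : 0 < K := by positivity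
  have hη' : 0 ≤ 1 - η := by linarith
  have hgood : ∀ v ∈ (deviantTuples G q η a)ᶜ, (1 - η) * K ≤ #(commonNbrs G v) := fun v hv => by
    simp only [deviantTuples, Finset.mem_compl, Finset.mem_filter, Finset.mem_univ, true_and,
      not_lt] at hv
    linarith [(abs_sub_le_iff.1 hv).2]
  have hcard : (1 - η) * Fintype.card V ^ a ≤ #(deviantTuples G q η a)ᶜ := by
    rw [card_compl, Nat.cast_sub (card_le_univ _)]
    simp only [Fintype.card_fun, Fintype.card_fin, Nat.cast_pow]
    linarith
  rw [tDen_completeBipartiteGraph_eq_sum, le_div_iff₀ (by positivity)]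
  calc (1 - η) ^ (b + 1) * (q ^ (a * b) * Fintype.card V ^ (a + b))
      = (1 - η) * Fintype.card V ^ a * ((1 - η) * K) ^ b := by
        simp only [K, mul_pow, ← pow_mul]; ring
    _ ≤ #(deviantTuples G q η a)ᶜ * ((1 - η) * K) ^ b := by gcongr
    _ ≤ ∑ v ∈ (deviantTuples G q η a)ᶜ, (#(commonNbrs G v) : ℝ) ^ b := by
      rw [← nsmul_eq_mul]
      exact card_nsmul_le_sum _ _ _ fun v hv => pow_le_pow_left₀ (by positivity) (hgood v hv) b
    _ ≤ _ := sum_le_sum_of_subset_of_nonneg (subset_univ _) fun _ _ _ => by positivity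

lemma sum_deviantTuples_pow_le [Nonempty V] (hq : 0 < q) {η C : ℝ} {a b : ℕ}
    (hdev : (#(deviantTuples G q η a) : ℝ) ≤ η * Fintype.card V ^ a)
    (hC : tDen q K[a, 2 * b] G ≤ C) :
    ∑ v ∈ deviantTuples G q η a, (#(commonNbrs G v) : ℝ) ^ b ≤
      √(η * C) * (q ^ (a * b) * Fintype.card V ^ (a + b)) := by
  have hN : (0 : ℝ) < Fintype.card V := by exact_mod_cast Fintype.card_pos
  set D : ℝ := q ^ (a * b) * Fintype.card V ^ (a + b)
  have hD : 0 < D := by positivity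
  have hC' : ∑ v : Fin a → V, (#(commonNbrs G v) : ℝ) ^ (2 * b) ≤
      C * (q ^ (a * (2 * b)) * Fintype.card V ^ (a + 2 * b)) := by
    rwa [tDen_completeBipartiteGraph_eq_sum, div_le_iff₀ (by positivity)] at hC
  have hsq : (∑ v ∈ deviantTuples G q η a, (#(commonNbrs G v) : ℝ) ^ b) ^ 2 ≤ η * C * D ^ 2 :=
    calc _ ≤ #(deviantTuples G q η a) *
          ∑ v ∈ deviantTuples G q η a, (#(commonNbrs G v) : ℝ) ^ (2 * b) := by
          simpa [← pow_mul, mul_comm b 2] using sq_sum_le_card_mul_sum_sq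
            (s := deviantTuples G q η a) (f := fun v => (#(commonNbrs G v) : ℝ) ^ b)
      _ ≤ (η * Fintype.card V ^ a) * (C * (q ^ (a * (2 * b)) * Fintype.card V ^ (a + 2 * b))) := by
          refine mul_le_mul hdev ((sum_le_sum_of_subset_of_nonneg (subset_univ _)
            fun _ _ _ => by positivity).trans hC') (by positivity) ((Nat.cast_nonneg _).trans hdev)
      _ = η * C * D ^ 2 := by simp only [D]; ring
  rw [← Real.sqrt_sq hD.le, ← Real.sqrt_mul' _ (sq_nonneg D)]
  exact Real.le_sqrt_of_sq_le hsq

lemma tDen_le_one_add_pow_add_sqrt [Nonempty V] (hq : 0 < q) {η C : ℝ} (hη : 0 ≤ η) {a b : ℕ}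
    (hdev : (#(deviantTuples G q η a) : ℝ) ≤ η * Fintype.card V ^ a)
    (hC : tDen q K[a, 2 * b] G ≤ C) :
    tDen q K[a, b] G ≤ (1 + η) ^ b + √(η * C) := by
  have hN : (0 : ℝ) < Fintype.card V := by exact_mod_cast Fintype.card_pos
  set K : ℝ := Fintype.card V * q ^ a
  have hK : 0 < K := by positivity
  have hx : ∀ v ∈ (deviantTuples G q η a)ᶜ, (#(commonNbrs G v) : ℝ) ^ b ≤ ((1 + η) * K) ^ b :=
    fun v hv => by
      simp only [deviantTuples, Finset.mem_compl, Finset.mem_filter, Finset.mem_univ, true_and,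
        not_lt] at hv
      exact pow_le_pow_left₀ (by positivity) (by linarith [(abs_sub_le_iff.1 hv).1]) b
  have hgood : ∑ v ∈ (deviantTuples G q η a)ᶜ, (#(commonNbrs G v) : ℝ) ^ b ≤
      (1 + η) ^ b * (q ^ (a * b) * Fintype.card V ^ (a + b)) :=
    calc _ ≤ #(deviantTuples G q η a)ᶜ * ((1 + η) * K) ^ b := by
          rw [← nsmul_eq_mul]; exact sum_le_card_nsmul _ _ _ hx
      _ ≤ Fintype.card V ^ a * ((1 + η) * K) ^ b := by
          gcongr
          exact_mod_cast (card_le_univ _).trans_eq (by simp)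
      _ = _ := by simp only [K, mul_pow, ← pow_mul]; ring
  have hbad := sum_deviantTuples_pow_le G hq hdev hC
  rw [tDen_completeBipartiteGraph_eq_sum, div_le_iff₀ (by positivity),
    ← sum_add_sum_compl (deviantTuples G q η a)]
  linarith

end Deviation

lemma tendsto_of_forall_eventually_between {ι : Type*} {l : Filter ι} {u : ι → ℝ} {L U : ℝ → ℝ}
    {c : ℝ} (hL : Tendsto L (𝓝[>] 0) (𝓝 c)) (hU : Tendsto U (𝓝[>] 0) (𝓝 c))
    (h : ∀ η ∈ Ioo (0 : ℝ) 1, ∀ᶠ i in l, L η ≤ u i ∧ u i ≤ U η) : Tendsto u l (𝓝 c) := by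
  refine tendsto_order.2 ⟨fun c' hc' => ?_, fun c' hc' => ?_⟩
  · obtain ⟨η, hη, hLη⟩ :=
      (Filter.Eventually.and (Ioo_mem_nhdsGT one_pos) (hL.eventually (lt_mem_nhds hc'))).exists
    filter_upwards [h η hη] with i hi using hLη.trans_le hi.1
  · obtain ⟨η, hη, hUη⟩ :=
      (Filter.Eventually.and (Ioo_mem_nhdsGT one_pos) (hU.eventually (gt_mem_nhds hc'))).exists
    filter_upwards [h η hη] with i hi using hi.2.trans_lt hUη

lemma tendsto_descFactorial_div_pow (k : ℕ) :
    Tendsto (fun n : ℕ => (n.descFactorial k : ℝ) / n ^ k) atTop (𝓝 1) :=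
  (Asymptotics.isEquivalent_iff_tendsto_one
    ((eventually_gt_atTop 0).mono fun n hn => by positivity)).1 (isEquivalent_descFactorial k)

section Sequences

variable {p : ℕ → ℝ} {G : ∀ n, SimpleGraph (Fin n)}

/-- The paper's "`K_{1,a}` is flat over the empty graph on `a` vertices". -/
def CommonNbrsConcentrate (p : ℕ → ℝ) (G : ∀ n, SimpleGraph (Fin n)) (a : ℕ) : Prop :=
  ∀ ε > 0, ∀ᶠ n in atTop, (#(deviantTuples (G n) (p n) ε a) : ℝ) ≤ ε * n ^ a

lemma tendsto_pow_mul_atTop (hpslow : ∀ α : ℝ, 0 < α → ∀ᶠ n : ℕ in atTop, (n : ℝ) ^ (-α) ≤ p n)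
    (d : ℕ) : Tendsto (fun n => p n ^ d * n) atTop atTop := by
  set α : ℝ := 1 / (d + 1)
  have hα : 0 < α := by positivity
  refine tendsto_atTop_mono' _ ?_ ((tendsto_rpow_atTop hα).comp tendsto_natCast_atTop_atTop)
  filter_upwards [hpslow α hα, eventually_gt_atTop 0] with n hpn hn
  have hn : (0 : ℝ) < n := by exact_mod_cast hn
  calc (n : ℝ) ^ α = ((n : ℝ) ^ (-α)) ^ d * n := by
        rw [← Real.rpow_natCast, ← Real.rpow_mul hn.le, ← Real.rpow_add_one hn.ne']
        congr 1
        simp only [α]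
        field_simp
        ring
    _ ≤ p n ^ d * n := by gcongr

lemma exists_eventually_tDen_le (hp : ∀ n, 0 < p n)
    (hpd : ∀ d, Tendsto (fun n => p n ^ d * n) atTop atTop)
    (hbdd : ∀ (m : ℕ) (F : SimpleGraph (Fin m)), ∃ M : ℝ, ∀ n, sDen (p n) F (G n) ≤ M)
    (a b : ℕ) : ∃ C, ∀ᶠ n in atTop, tDen (p n) K[a, b] (G n) ≤ C := by
  have base : ∀ a b, a * b = 0 → ∃ C, ∀ᶠ n in atTop, tDen (p n) K[a, b] (G n) ≤ C :=
    fun a b h => ⟨1, .of_forall fun n => tDen_le_one_of_edgeCount_eq_zero _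
      (by rw [edgeCount_completeBipartiteGraph]; simpa using h) _⟩
  induction hk : a + b using Nat.strong_induction_on generalizing a b with
  | _ k ih =>
  rcases a with _ | a
  · exact base _ _ (zero_mul _)
  rcases b with _ | b
  · exact base _ _ (mul_zero _)
  obtain ⟨C₁, hC₁⟩ := ih (b + 1 + a) (by omega) (b + 1) a rfl
  obtain ⟨C₂, hC₂⟩ := ih (a + 1 + b) (by omega) (a + 1) b rfl
  obtain ⟨M, hM⟩ := hbdd _ (K[a + 1, b + 1].comap finSumFinEquiv.symm)
  refine ⟨M + (a + 1) ^ 2 * C₁ + (b + 1) ^ 2 * C₂, ?_⟩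
  filter_upwards [hC₁, hC₂, eventually_ge_atTop (a + b + 2), (hpd (b + 1)).eventually_ge_atTop 1,
    (hpd (a + 1)).eventually_ge_atTop 1] with n h₁ h₂ hn hp₁ hp₂
  have hn0 : (0 : ℝ) < n := by exact_mod_cast (by omega : 0 < n)
  have hs : sDen (p n) K[a + 1, b + 1] (G n) ≤ M := by
    rw [← sDen_congr (SimpleGraph.Iso.comap finSumFinEquiv.symm K[a + 1, b + 1])]
    exact hM n
  have hr : (n.descFactorial (a + b + 2) : ℝ) / n ^ (a + b + 2) ≤ 1 :=
    div_le_one_of_le₀ (by exact_mod_cast Nat.descFactorial_le_pow _ _) (pow_pos hn0 _).le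
  have key := tDen_sub_sDen_mul_le (G n) (hp n) (by simpa using hn)
  simp only [Fintype.card_fin] at key
  have h₁' : (a + 1) ^ 2 * tDen (p n) K[b + 1, a] (G n) / (p n ^ (b + 1) * n) ≤ (a + 1) ^ 2 * C₁ :=
    (div_le_self (by have := tDen_nonneg (G n) K[b + 1, a] (hp n).le; positivity) hp₁).trans
      (by gcongr)
  have h₂' : (b + 1) ^ 2 * tDen (p n) K[a + 1, b] (G n) / (p n ^ (a + 1) * n) ≤ (b + 1) ^ 2 * C₂ :=
    (div_le_self (by have := tDen_nonneg (G n) K[a + 1, b] (hp n).le; positivity) hp₂).trans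
      (by gcongr)
  have hsr := (mul_le_of_le_one_right (sDen_nonneg (G n) _ (hp n).le) hr).trans hs
  linarith

lemma tendsto_tDen_sub_sDen_mul (hp : ∀ n, 0 < p n)
    (hpd : ∀ d, Tendsto (fun n => p n ^ d * n) atTop atTop)
    (hbd : ∀ a b, ∃ C, ∀ᶠ n in atTop, tDen (p n) K[a, b] (G n) ≤ C) (a b : ℕ) :
    Tendsto (fun n => tDen (p n) K[a + 1, b + 1] (G n) - sDen (p n) K[a + 1, b + 1] (G n) *
      (n.descFactorial (a + b + 2) / n ^ (a + b + 2))) atTop (𝓝 0) := by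
  obtain ⟨C₁, hC₁⟩ := hbd (b + 1) a
  obtain ⟨C₂, hC₂⟩ := hbd (a + 1) b
  have herr : Tendsto (fun n => (a + 1) ^ 2 * C₁ / (p n ^ (b + 1) * n) +
      (b + 1) ^ 2 * C₂ / (p n ^ (a + 1) * n)) atTop (𝓝 0) := by
    simpa using (tendsto_const_nhds.div_atTop (hpd (b + 1))).add
      (tendsto_const_nhds.div_atTop (hpd (a + 1)))
  refine tendsto_of_tendsto_of_tendsto_of_le_of_le' tendsto_const_nhds herr ?_ ?_
  · filter_upwards [eventually_ge_atTop (a + b + 2)] with n hn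
    have := sDen_mul_le_tDen (G n) K[a + 1, b + 1] (hp n) (by simp; omega)
    simp only [Fintype.card_fin, Fintype.card_sum, show a + 1 + (b + 1) = a + b + 2 by ring] at this
    rwa [sub_nonneg]
  · filter_upwards [hC₁, hC₂, eventually_ge_atTop (a + b + 2)] with n h₁ h₂ hn
    have hn0 : (0 : ℝ) < n := by exact_mod_cast (by omega : 0 < n)
    have key := tDen_sub_sDen_mul_le (G n) (hp n) (by simpa using hn)
    simp only [Fintype.card_fin] at key
    refine key.trans (add_le_add ?_ ?_) <;> gcongr <;> exact (by have := hp n; positivity)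

lemma tendsto_sDen_iff_tendsto_tDen (hp : ∀ n, 0 < p n)
    (hpd : ∀ d, Tendsto (fun n => p n ^ d * n) atTop atTop)
    (hbd : ∀ a b, ∃ C, ∀ᶠ n in atTop, tDen (p n) K[a, b] (G n) ≤ C) (a b : ℕ) :
    Tendsto (fun n => sDen (p n) K[a + 1, b + 1] (G n)) atTop (𝓝 1) ↔
      Tendsto (fun n => tDen (p n) K[a + 1, b + 1] (G n)) atTop (𝓝 1) := by
  have hr := tendsto_descFactorial_div_pow (a + b + 2)
  have hd := tendsto_tDen_sub_sDen_mul hp hpd hbd a b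
  refine ⟨fun hs => by simpa using (hs.mul hr).add hd, fun ht => ?_⟩
  refine ((ht.sub hd).div hr one_ne_zero).congr' ?_ |>.trans (by simp)
  filter_upwards [eventually_ge_atTop (a + b + 2)] with n hn
  have hD : (0 : ℝ) < n.descFactorial (a + b + 2) := by exact_mod_cast Nat.descFactorial_pos.2 hn
  have hn0 : (0 : ℝ) < n := by exact_mod_cast (by omega : 0 < n)
  simp only [Pi.div_apply, sub_sub_cancel]
  exact mul_div_cancel_right₀ _ (by positivity)

lemma commonNbrsConcentrate_of_tendsto (hp : ∀ n, 0 < p n) {a : ℕ}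
    (h₁ : Tendsto (fun n => tDen (p n) K[a, 1] (G n)) atTop (𝓝 1))
    (h₂ : Tendsto (fun n => tDen (p n) K[a, 2] (G n)) atTop (𝓝 1)) :
    CommonNbrsConcentrate p G a := by
  intro ε hε
  have hvar : Tendsto (fun n => tDen (p n) K[a, 2] (G n) - 2 * tDen (p n) K[a, 1] (G n) + 1)
      atTop (𝓝 0) := by
    convert (h₂.sub (h₁.const_mul 2)).add_const 1 using 2
    norm_num
  filter_upwards [hvar.eventually (gt_mem_nhds (pow_pos hε 3)), eventually_gt_atTop 0]
    with n hn hn0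
  have : Nonempty (Fin n) := ⟨⟨0, hn0⟩⟩
  have hcheb := card_deviantTuples_mul_sq_le (G n) (hp n) hε.le a
  simp only [Fintype.card_fin] at hcheb
  refine le_of_mul_le_mul_right ?_ (pow_pos hε 2)
  calc _ ≤ _ := hcheb
    _ ≤ (n : ℝ) ^ a * ε ^ 3 := by gcongr
    _ = ε * n ^ a * ε ^ 2 := by ring

lemma tendsto_tDen_of_commonNbrsConcentrate (hp : ∀ n, 0 < p n) {a b : ℕ}
    (hconc : CommonNbrsConcentrate p G a)
    (hbd : ∃ C, ∀ᶠ n in atTop, tDen (p n) K[a, 2 * b] (G n) ≤ C) :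
    Tendsto (fun n => tDen (p n) K[a, b] (G n)) atTop (𝓝 1) := by
  obtain ⟨C, hC⟩ := hbd
  refine tendsto_of_forall_eventually_between (L := fun η => (1 - η) ^ (b + 1))
    (U := fun η => (1 + η) ^ b + √(η * C)) ?_ ?_ fun η hη => ?_
  · simpa using ((by fun_prop : Continuous fun η : ℝ => (1 - η) ^ (b + 1)).tendsto 0).mono_left
      nhdsWithin_le_nhds
  · simpa using ((by fun_prop : Continuous fun η : ℝ => (1 + η) ^ b + √(η * C)).tendsto 0).mono_left
      nhdsWithin_le_nhds
  filter_upwards [hconc η hη.1, hC, eventually_gt_atTop 0] with n hdev hCn hn0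
  have : Nonempty (Fin n) := ⟨⟨0, hn0⟩⟩
  replace hdev : (#(deviantTuples (G n) (p n) η a) : ℝ) ≤ η * Fintype.card (Fin n) ^ a := by
    rwa [Fintype.card_fin]
  exact ⟨one_sub_pow_le_tDen (G n) (hp n) hη.2.le hdev b,
    tDen_le_one_add_pow_add_sqrt (G n) (hp n) hη.1.le hdev hCn⟩

lemma tendsto_tDen_one_two
    (h₁₁ : Tendsto (fun n => tDen (p n) K[1, 1] (G n)) atTop (𝓝 1))
    (h₂₂ : Tendsto (fun n => tDen (p n) K[2, 2] (G n)) atTop (𝓝 1)) :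
    Tendsto (fun n => tDen (p n) K[1, 2] (G n)) atTop (𝓝 1) := by
  refine tendsto_of_tendsto_of_tendsto_of_le_of_le' (by simpa using h₁₁.pow 2)
    (by simpa using h₂₂.sqrt) ?_ ?_
  · filter_upwards [eventually_gt_atTop 0] with n hn0
    have : Nonempty (Fin n) := ⟨⟨0, hn0⟩⟩
    exact sq_tDen_le_tDen_two_mul (G n) (p n) 1 1
  · filter_upwards [eventually_gt_atTop 0] with n hn0
    have : Nonempty (Fin n) := ⟨⟨0, hn0⟩⟩
    rw [tDen_completeBipartiteGraph_comm]
    exact (le_abs_self _).trans (Real.abs_le_sqrt (sq_tDen_le_tDen_two_mul (G n) (p n) 2 1))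

lemma commonNbrsConcentrate_of_tendsto_K₁₁_K₂₂ (hp : ∀ n, 0 < p n)
    (hbd : ∀ a b, ∃ C, ∀ᶠ n in atTop, tDen (p n) K[a, b] (G n) ≤ C)
    (h₁₁ : Tendsto (fun n => tDen (p n) K[1, 1] (G n)) atTop (𝓝 1))
    (h₂₂ : Tendsto (fun n => tDen (p n) K[2, 2] (G n)) atTop (𝓝 1)) (s : ℕ) :
    CommonNbrsConcentrate p G s := by
  have h₁₂ := tendsto_tDen_one_two h₁₁ h₂₂
  have h₂₁ : Tendsto (fun n => tDen (p n) K[2, 1] (G n)) atTop (𝓝 1) := by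
    simpa only [tDen_completeBipartiteGraph_comm _ _ 2] using h₁₂
  have hs₁ := tendsto_tDen_of_commonNbrsConcentrate hp
    (commonNbrsConcentrate_of_tendsto hp h₁₁ h₁₂) (hbd 1 (2 * s))
  have hs₂ := tendsto_tDen_of_commonNbrsConcentrate hp
    (commonNbrsConcentrate_of_tendsto hp h₂₁ h₂₂) (hbd 2 (2 * s))
  simp only [tDen_completeBipartiteGraph_comm _ _ _ s] at hs₁ hs₂
  exact commonNbrsConcentrate_of_tendsto hp hs₁ hs₂

end Sequences

/-- Under the assumptions of Conjecture q2, `s_p(K_{s,t},G_n) → 1` for all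
`s,t ≥ 1`; moreover `K_{1,s}` is flat over the empty graph on `s` vertices. -/
theorem complete_bipartite_counts (p : ℕ → ℝ) (hp : ∀ n, p n ∈ Ioc (0:ℝ) 1)
    (hpslow : ∀ α : ℝ, 0 < α → ∀ᶠ n : ℕ in atTop, (n:ℝ) ^ (-α) ≤ p n)
    (G : ∀ n, SimpleGraph (Fin n))
    (hK2 : Tendsto (fun n => sDen (p n) (⊤ : SimpleGraph (Fin 2)) (G n)) atTop (nhds 1))
    (hC4 : Tendsto (fun n => sDen (p n) (SimpleGraph.cycleGraph 4) (G n)) atTop (nhds 1))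
    (hbdd : ∀ (m : ℕ) (F : SimpleGraph (Fin m)), ∃ M : ℝ, ∀ n, sDen (p n) F (G n) ≤ M) :
    (∀ s t : ℕ, 1 ≤ s → 1 ≤ t →
      Tendsto (fun n => sDen (p n) (completeBipartiteGraph (Fin s) (Fin t)) (G n))
        atTop (nhds 1)) ∧
    (∀ s : ℕ, 1 ≤ s → ∀ ε : ℝ, 0 < ε → ∀ᶠ n in atTop,
      ((Finset.univ.filter (fun v : Fin s → Fin n =>
          ε * ((n:ℝ) * p n ^ s) <
            |((Finset.univ.filter (fun w : Fin n => ∀ i, (G n).Adj w (v i))).card : ℝ) -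
              (n:ℝ) * p n ^ s|)).card : ℝ) ≤ ε * (n:ℝ) ^ s) := by
  have hp₀ (n : ℕ) : 0 < p n := (hp n).1
  have hpd := tendsto_pow_mul_atTop hpslow
  have hbd := exists_eventually_tDen_le hp₀ hpd hbdd
  have h₁₁ := (tendsto_sDen_iff_tendsto_tDen hp₀ hpd hbd 0 0).1 <| by
    simpa only [sDen_congr topIsoCompleteBipartiteGraph] using hK2
  have h₂₂ := (tendsto_sDen_iff_tendsto_tDen hp₀ hpd hbd 1 1).1 <| by
    simpa only [sDen_congr cycleGraphIsoCompleteBipartiteGraph] using hC4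
  have hconc := commonNbrsConcentrate_of_tendsto_K₁₁_K₂₂ hp₀ hbd h₁₁ h₂₂
  refine ⟨fun s t hs ht => ?_, fun s _ ε hε => ?_⟩
  · obtain ⟨s, rfl⟩ := Nat.exists_eq_add_of_le' hs
    obtain ⟨t, rfl⟩ := Nat.exists_eq_add_of_le' ht
    exact (tendsto_sDen_iff_tendsto_tDen hp₀ hpd hbd s t).2
      (tendsto_tDen_of_commonNbrsConcentrate hp₀ (hconc _) (hbd _ _))
  · have := hconc s ε hε
    simp only [deviantTuples, commonNbrs, Fintype.card_fin] at this
    -- the two sides differ only in their `Decidable` instances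
    convert this
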